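/- Every finite prefix of the infinite word 2·v is squarefree, where v is the ternary Thue–Morse word. -/

import Mathlib

/-- A square is a word of the form XX with X nonempty. -/
def IsSquare' {α : Type*} (w : List α) : Prop :=
  ∃ X : List α, X ≠ [] ∧ w = X ++ X

/-- A word contains a square if some factor (contiguous subword) of it is a square. -/
def HasSquare {α : Type*} (w : List α) : Prop :=
  ∃ u, u <:+: w ∧ IsSquare' u

/-- A word is squarefree if none of its factors is a square. -/
def SquareFree' {α : Type*} (w : List α) : Prop := ¬ HasSquare w

/-- Apply the morphism determined by letter images `h` to a word. -/
def applyMorphism {α : Type*} (h : α → List α) (w : List α) : List α := w.flatMap h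

/-- The ternary morphism τ with τ(0)=012, τ(1)=02, τ(2)=1. -/
def tau : Fin 3 → List (Fin 3) := fun a =>
  if a = 0 then [0,1,2] else if a = 1 then [0,2] else [1]

/-- The k-th iterate of τ applied to the word 0; these are prefixes of the ternary
Thue–Morse word v = τ^ω(0), and every finite prefix of v is a prefix of some iterate. -/
def tauIter (k : ℕ) : List (Fin 3) := (applyMorphism tau)^[k] [0]

/-! Let `t` be the Thue–Morse sequence and code two consecutive bits by `pairCode a b = 1 + a - b`.
Since `t` is fixed by `0 ↦ 01, 1 ↦ 10`, a local identity between this morphism and `τ` shows that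
the code of `t` is `v`, so `2 v` is the code of `1 t`.

A square of period `L` in the code of a binary sequence `s` makes the offset `s n - s (n + L)`
constant along `L + 1` positions; it cannot be `±1` (that would make `s` constant there), so it
is `0` and `s` has an overlap. Finally `1 t` is overlap-free: `t` is overlap-free and has no
square prefix, both by descent along `t (2n) = t n`, `t (2n+1) = ¬ t n`. -/

def thueMorse (n : ℕ) : Bool := decide ((Nat.digits 2 n).sum % 2 = 1)

@[simp] lemma thueMorse_two_mul (n : ℕ) : thueMorse (2 * n) = thueMorse n := by
  rcases Nat.eq_zero_or_pos n with rfl | hn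
  · rfl
  · simp [thueMorse, Nat.digits_def' one_lt_two (by omega : 0 < 2 * n)]

@[simp] lemma thueMorse_two_mul_add_one (n : ℕ) : thueMorse (2 * n + 1) = !thueMorse n := by
  rcases Nat.mod_two_eq_zero_or_one (Nat.digits 2 n).sum with h | h <;>
    simp [thueMorse, Nat.add_mod, show (2 * n + 1) / 2 = n by omega, h]

lemma thueMorse_eq_add_two_mul_iff (p M : ℕ) :
    thueMorse p = thueMorse (p + 2 * M) ↔ thueMorse (p / 2) = thueMorse (p / 2 + M) := by
  obtain ⟨c, rfl | rfl⟩ := Nat.even_or_odd' p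
  · rw [show 2 * c + 2 * M = 2 * (c + M) by ring, thueMorse_two_mul, thueMorse_two_mul]
    simp
  · rw [show 2 * c + 1 + 2 * M = 2 * (c + M) + 1 by ring, thueMorse_two_mul_add_one,
      thueMorse_two_mul_add_one]
    simp [show (2 * c + 1) / 2 = c by omega]

lemma thueMorse_not_three_eq (n : ℕ) :
    ¬ (thueMorse n = thueMorse (n + 1) ∧ thueMorse (n + 1) = thueMorse (n + 2)) := by
  rintro ⟨h₁, h₂⟩
  obtain ⟨c, rfl | rfl⟩ := Nat.even_or_odd' n
  · simp at h₁
  · rw [show 2 * c + 1 + 1 = 2 * (c + 1) by ring, show 2 * c + 1 + 2 = 2 * (c + 1) + 1 by ring]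
      at h₂
    simp at h₂

/-- An odd shift maps the aligned blocks `t(2r) t(2r+1)` onto misaligned ones; on four
consecutive letters this forces three equal consecutive letters of `t`. -/
lemma thueMorse_not_odd_shift (p M : ℕ)
    (H : ∀ a, p ≤ a → a ≤ p + 3 → thueMorse a = thueMorse (a + (2 * M + 1))) : False := by
  have H' : ∀ a b, p ≤ a → a ≤ p + 3 → b = a + (2 * M + 1) → thueMorse a = thueMorse b :=
    fun a b h₁ h₂ hb => hb ▸ H a h₁ h₂
  obtain ⟨c, rfl | rfl⟩ := Nat.even_or_odd' p
  · have h₀ := H' (2 * c) (2 * (c + M) + 1) (by omega) (by omega) (by omega)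
    have h₁ := H' (2 * c + 1) (2 * (c + M + 1)) (by omega) (by omega) (by omega)
    have h₂ := H' (2 * (c + 1)) (2 * (c + M + 1) + 1) (by omega) (by omega) (by omega)
    have h₃ := H' (2 * (c + 1) + 1) (2 * (c + M + 2)) (by omega) (by omega) (by omega)
    simp only [thueMorse_two_mul, thueMorse_two_mul_add_one] at h₀ h₁ h₂ h₃
    refine thueMorse_not_three_eq (c + M) ⟨?_, ?_⟩
    · rw [← h₁, h₀, Bool.not_not]
    · rw [← h₃, h₂, Bool.not_not]
  · have h₀ := H' (2 * c + 1) (2 * (c + M + 1)) (by omega) (by omega) (by omega)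
    have h₁ := H' (2 * (c + 1)) (2 * (c + M + 1) + 1) (by omega) (by omega) (by omega)
    have h₂ := H' (2 * (c + 1) + 1) (2 * (c + M + 2)) (by omega) (by omega) (by omega)
    have h₃ := H' (2 * (c + 2)) (2 * (c + M + 2) + 1) (by omega) (by omega) (by omega)
    simp only [thueMorse_two_mul, thueMorse_two_mul_add_one] at h₀ h₁ h₂ h₃
    refine thueMorse_not_three_eq c ⟨?_, ?_⟩
    · rw [h₁, ← h₀, Bool.not_not]
    · rw [h₃, ← h₂, Bool.not_not]

theorem thueMorse_not_overlap (L : ℕ) (hL : 0 < L) (i : ℕ)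
    (H : ∀ a, i ≤ a → a ≤ i + L → thueMorse a = thueMorse (a + L)) : False := by
  induction L using Nat.strong_induction_on generalizing i with
  | _ L ih =>
  obtain ⟨M, rfl | rfl⟩ := Nat.even_or_odd' L
  · refine ih M (by omega) (by omega) (i / 2) fun r hr₁ hr₂ => ?_
    have h := H (max i (2 * r)) (by omega) (by omega)
    rwa [thueMorse_eq_add_two_mul_iff, show max i (2 * r) / 2 = r by omega] at h
  · rcases Nat.eq_zero_or_pos M with rfl | hM
    · exact thueMorse_not_three_eq i ⟨H i le_rfl (by omega), H (i + 1) (by omega) le_rfl⟩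
    · exact thueMorse_not_odd_shift i M fun a h₁ h₂ => H a h₁ (by omega)

theorem thueMorse_not_square_prefix (L : ℕ) (hL : 0 < L)
    (H : ∀ a < L, thueMorse a = thueMorse (a + L)) : False := by
  induction L using Nat.strong_induction_on with
  | _ L ih =>
  obtain ⟨M, rfl | rfl⟩ := Nat.even_or_odd' L
  · refine ih M (by omega) (by omega) fun r hr => ?_
    have h := H (2 * r) (by omega)
    rwa [thueMorse_eq_add_two_mul_iff, show 2 * r / 2 = r by omega] at h
  · have h_even : ∀ r ≤ M, thueMorse r = !thueMorse (r + M) := fun r hr => by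
      simpa [show 2 * r + (2 * M + 1) = 2 * (r + M) + 1 by ring] using H (2 * r) (by omega)
    have h_odd : ∀ r < M, (!thueMorse r) = thueMorse (r + M + 1) := fun r hr => by
      simpa [show 2 * r + 1 + (2 * M + 1) = 2 * (r + M + 1) by ring] using H (2 * r + 1) (by omega)
    have h_const : ∀ r ≤ M, thueMorse (r + M) = thueMorse M := by
      intro r hr
      induction r with
      | zero => simp
      | succ r ihr => rw [← ihr (by omega), add_right_comm, ← h_odd r (by omega),
          h_even r (by omega), Bool.not_not]
    have := h_even M le_rfl
    rw [h_const M le_rfl] at this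
    simp at this

/-- Reading `false, true` as `0, 1`, this is `pairCode a b = 1 + a - b`. -/
def pairCode : Bool → Bool → Fin 3
  | false, true => 0
  | false, false => 1
  | true, true => 1
  | true, false => 2

lemma pairCode_eq_pairCode {a b c d : Bool} (h : pairCode a b = pairCode c d) :
    (a = c → b = d) ∧ (a ≠ c → a = b ∧ c = d) := by
  revert a b c d; decide

def pairCodeSeq (s : ℕ → Bool) (n : ℕ) : Fin 3 := pairCode (s n) (s (n + 1))

lemma overlap_of_pairCodeSeq_square (s : ℕ → Bool) (i L : ℕ)
    (H : ∀ a, i ≤ a → a < i + L → pairCodeSeq s a = pairCodeSeq s (a + L)) :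
    ∀ a, i ≤ a → a ≤ i + L → s a = s (a + L) := by
  by_cases hi : s i = s (i + L)
  · intro a ha
    induction a, ha using Nat.le_induction with
    | base => exact fun _ => hi
    | succ a ha ih =>
      intro ha'
      rw [add_right_comm]
      exact (pairCode_eq_pairCode (H a ha (by omega))).1 (ih (by omega))
  · have : ∀ a, i ≤ a → a ≤ i + L → s a ≠ s (a + L) ∧ s a = s i := by
      intro a ha
      induction a, ha using Nat.le_induction with
      | base => exact fun _ => ⟨hi, rfl⟩
      | succ a ha ih =>
        intro ha'
        obtain ⟨hne, hconst⟩ := ih (by omega)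
        obtain ⟨h₁, h₂⟩ := (pairCode_eq_pairCode (H a ha (by omega))).2 hne
        rw [add_right_comm, ← h₁, ← h₂]
        exact ⟨hne, h₁ ▸ hconst⟩
    exact absurd (this (i + L) (by omega) le_rfl).2.symm hi

lemma exists_period_of_hasSquare_map_range {α : Type*} (g : ℕ → α) (N : ℕ)
    (h : HasSquare ((List.range N).map g)) :
    ∃ i L, 0 < L ∧ ∀ a, i ≤ a → a < i + L → g a = g (a + L) := by
  obtain ⟨_, hinf, X, hX, rfl⟩ := h
  obtain ⟨i, hlen, hget⟩ := List.infix_iff_getElem?.1 hinf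
  have hL : 0 < X.length := List.length_pos_iff.2 hX
  refine ⟨i, X.length, hL, fun a ha₁ ha₂ => ?_⟩
  simp only [List.length_append, List.length_map, List.length_range] at hlen
  have h₁ := hget (a - i) (by simp; omega)
  have h₂ := hget (a - i + X.length) (by simp; omega)
  rw [show a - i + i = a by omega, List.getElem?_map, List.getElem?_range (by omega),
    List.getElem_append_left (by omega)] at h₁
  rw [show a - i + X.length + i = a + X.length by omega, List.getElem?_map,
    List.getElem?_range (by omega), List.getElem_append_right (by omega)] at h₂
  simp only [Nat.add_sub_cancel, Option.map_some, Option.some.injEq] at h₁ h₂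
  rw [h₁, h₂]

/-- The sequence `1 t₀ t₁ t₂ …`, whose pair code is `2 v`. -/
def oneThueMorse : ℕ → Bool
  | 0 => true
  | n + 1 => thueMorse n

lemma oneThueMorse_not_overlap (L : ℕ) (hL : 0 < L) (i : ℕ)
    (H : ∀ a, i ≤ a → a ≤ i + L → oneThueMorse a = oneThueMorse (a + L)) : False := by
  have H' : ∀ a, i ≤ a + 1 → a + 1 ≤ i + L → thueMorse a = thueMorse (a + L) := fun a h₁ h₂ => by
    have h := H (a + 1) h₁ h₂
    rwa [add_right_comm] at h
  cases i with
  | zero => exact thueMorse_not_square_prefix L hL fun a ha => H' a (by omega) (by omega)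
  | succ i => exact thueMorse_not_overlap L hL i fun a h₁ h₂ => H' a (by omega) (by omega)

lemma squareFree_map_range_pairCodeSeq_oneThueMorse (N : ℕ) :
    SquareFree' ((List.range N).map (pairCodeSeq oneThueMorse)) := fun h => by
  obtain ⟨i, L, hL, H⟩ := exists_period_of_hasSquare_map_range _ N h
  exact oneThueMorse_not_overlap L hL i (overlap_of_pairCodeSeq_square _ i L H)

/-- The right-hand pair ends the code of `a ā b b̄`, the image of `a b` under `0 ↦ 01, 1 ↦ 10`;
up to a letter `0` carried across the boundary, `τ` maps the code of `a b` onto it. -/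
lemma tau_pairCode (a b : Bool) :
    tau (pairCode a b) ++ (if b then [] else [0]) =
      (if a then [] else [0]) ++ [pairCode (!a) b, pairCode b (!b)] := by
  revert a b; decide

lemma flatMap_tau_map_range_pairCodeSeq (m : ℕ) :
    ((List.range m).map (pairCodeSeq thueMorse)).flatMap tau ++
        (if thueMorse m then [] else [0]) =
      (List.range (2 * m + 1)).map (pairCodeSeq thueMorse) := by
  induction m with
  | zero => decide
  | succ m ih =>
    rw [show 2 * (m + 1) + 1 = 2 * m + 1 + 1 + 1 by ring, List.range_succ, List.range_succ,
      List.range_succ, List.map_append, List.map_append, List.map_append, ← ih,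
      List.flatMap_append]
    simp only [List.map_cons, List.map_nil, List.flatMap_cons, List.flatMap_nil, List.append_nil,
      List.append_assoc, pairCodeSeq, tau_pairCode]
    rw [show 2 * m + 1 + 1 = 2 * (m + 1) by ring]
    simp only [thueMorse_two_mul, thueMorse_two_mul_add_one, List.cons_append, List.nil_append]

lemma tauIter_prefix_map_range_pairCodeSeq (k : ℕ) :
    ∃ N, tauIter k <+: (List.range N).map (pairCodeSeq thueMorse) := by
  induction k with
  | zero => exact ⟨1, by decide⟩
  | succ k ih =>
    obtain ⟨N, w, hw⟩ := ih
    refine ⟨2 * N + 1, ?_⟩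
    rw [← flatMap_tau_map_range_pairCodeSeq, tauIter, Function.iterate_succ_apply', ← tauIter,
      ← hw, List.flatMap_append, List.append_assoc]
    exact List.prefix_append _ _

lemma SquareFree'.of_infix {α : Type*} {w p : List α} (hw : SquareFree' w) (hp : p <:+: w) :
    SquareFree' p :=
  fun ⟨u, hu, hsq⟩ => hw ⟨u, hu.trans hp, hsq⟩

theorem prefixes_of_two_v_squarefree (k : ℕ) (p : List (Fin 3))
    (hp : p <+: (2 :: tauIter k)) : SquareFree' p := by
  obtain ⟨N, hN⟩ := tauIter_prefix_map_range_pairCodeSeq k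
  have h : (2 : Fin 3) :: tauIter k <+: (List.range (N + 1)).map (pairCodeSeq oneThueMorse) := by
    rw [List.range_succ_eq_map, List.map_cons, List.map_map]
    exact List.cons_prefix_cons.2 ⟨rfl, hN⟩
  exact (squareFree_map_range_pairCodeSeq_oneThueMorse (N + 1)).of_infix (hp.trans h).isInfix
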